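/- Every element of the basis of a k-maximal submonoid of Σ* is a primitive word. -/

import Mathlib

/-- The basis of a submonoid `M` of the free monoid `Σ*`: `(M \ {ε}) \ (M \ {ε})²`. -/
def basisOf {α : Type*} (M : Submonoid (FreeMonoid α)) : Set (FreeMonoid α) :=
  ((M : Set (FreeMonoid α)) \ {1}) \
    {w | ∃ u ∈ (M : Set (FreeMonoid α)) \ {1}, ∃ v ∈ (M : Set (FreeMonoid α)) \ {1}, w = u * v}

/-- A submonoid of `Σ*` is `k`-maximal if its rank (cardinality of its basis) is at most `k`
and it is maximal (w.r.t. inclusion) among submonoids of rank at most `k`. -/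
def IsKMaximal {α : Type*} (k : ℕ) (M : Submonoid (FreeMonoid α)) : Prop :=
  (basisOf M).Finite ∧ (basisOf M).ncard ≤ k ∧
    ∀ M' : Submonoid (FreeMonoid α),
      (basisOf M').Finite → (basisOf M').ncard ≤ k → M ≤ M' → M = M'

/-- A nonempty word is primitive if it is not a proper power: `w = vⁿ` implies `n = 1`. -/
def Primitive {α : Type*} (w : FreeMonoid α) : Prop :=
  w ≠ 1 ∧ ∀ (v : FreeMonoid α) (n : ℕ), w = v ^ n → n = 1

/-!
If a basis element `x` of `M` were a proper power `vⁿ` (`n ≥ 2`), adjoin `v` to the basis of `M`.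
In the resulting submonoid `x = v · vⁿ⁻¹` is decomposable, so `v` takes the place of `x` in the
basis and the rank does not grow. By `k`-maximality the new submonoid is `M` itself; hence
`v ∈ M`, and `x = v · vⁿ⁻¹` is already decomposable in `M`, a contradiction.
-/

open Set Submonoid

theorem FreeMonoid.pow_ne_one {α : Type*} {v : FreeMonoid α} {n : ℕ} (hv : v ≠ 1) (hn : n ≠ 0) :
    v ^ n ≠ 1 := by
  rwa [Ne, ← isUnit_iff_eq_one, isUnit_pow_iff hn, isUnit_iff_eq_one]

section basisOf

variable {α : Type*}

theorem closure_basisOf (M : Submonoid (FreeMonoid α)) : closure (basisOf M) = M := by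
  refine le_antisymm (closure_le.2 fun x hx => hx.1.1) fun w hw => ?_
  induction h : w.length using Nat.strong_induction_on generalizing w with
  | _ n ih =>
  by_cases hw1 : w = 1
  · exact hw1 ▸ one_mem _
  by_cases hb : w ∈ basisOf M
  · exact subset_closure hb
  obtain ⟨u, ⟨hu, hu1⟩, v, ⟨hv, hv1⟩, rfl⟩ :
      ∃ u ∈ (M : Set (FreeMonoid α)) \ {1}, ∃ v ∈ (M : Set (FreeMonoid α)) \ {1}, w = u * v :=
    not_not.1 fun hindec => hb ⟨⟨hw, hw1⟩, hindec⟩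
  have hu0 : u.length ≠ 0 := FreeMonoid.length_eq_zero.not.2 hu1
  have hv0 : v.length ≠ 0 := FreeMonoid.length_eq_zero.not.2 hv1
  rw [FreeMonoid.length_mul] at h
  exact mul_mem (ih _ (by omega) u hu rfl) (ih _ (by omega) v hv rfl)

theorem basisOf_closure_subset (S : Set (FreeMonoid α)) : basisOf (closure S) ⊆ S := by
  intro w hw
  induction hw.1.1 using closure_induction with
  | mem x hx => exact hx
  | one => exact absurd rfl hw.1.2
  | mul x y hx hy ihx ihy =>
    by_cases hx1 : x = 1
    · subst hx1
      rw [one_mul] at hw ⊢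
      exact ihy hw
    by_cases hy1 : y = 1
    · subst hy1
      rw [mul_one] at hw ⊢
      exact ihx hw
    exact absurd ⟨x, ⟨hx, hx1⟩, y, ⟨hy, hy1⟩, rfl⟩ hw.2

theorem pow_notMem_basisOf {M : Submonoid (FreeMonoid α)} {v : FreeMonoid α} (hv : v ∈ M)
    (hv1 : v ≠ 1) {n : ℕ} (hn : 2 ≤ n) : v ^ n ∉ basisOf M := fun h =>
  h.2 ⟨v, ⟨hv, hv1⟩, v ^ (n - 1), ⟨pow_mem hv _, FreeMonoid.pow_ne_one hv1 (by omega)⟩,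
    by rw [← pow_succ', Nat.sub_add_cancel (by omega)]⟩

theorem IsKMaximal.mem_of_notMem_basisOf_closure_insert {k : ℕ} {M : Submonoid (FreeMonoid α)}
    (hmax : IsKMaximal k M) {x v : FreeMonoid α} (hx : x ∈ basisOf M)
    (hx' : x ∉ basisOf (closure (insert v (basisOf M)))) : v ∈ M := by
  obtain ⟨hfin, hcard, hmaximal⟩ := hmax
  set M' := closure (insert v (basisOf M))
  have hsub : basisOf M' ⊆ insert v (basisOf M \ {x}) := by
    intro y hy
    rcases basisOf_closure_subset _ hy with rfl | hyB
    · exact mem_insert _ _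
    · exact mem_insert_of_mem _ ⟨hyB, fun hyx => hx' (hyx ▸ hy)⟩
  have hfin' : (insert v (basisOf M \ {x})).Finite := hfin.sdiff.insert v
  have hle : M ≤ M' := closure_basisOf M ▸ closure_mono (subset_insert _ _)
  have hcard' : (basisOf M').ncard ≤ k := calc
    _ ≤ (insert v (basisOf M \ {x})).ncard := ncard_le_ncard hsub hfin'
    _ ≤ (basisOf M \ {x}).ncard + 1 := ncard_insert_le _ _
    _ = (basisOf M).ncard := ncard_sdiff_singleton_add_one hx hfin
    _ ≤ k := hcard
  rw [hmaximal M' (hfin'.subset hsub) hcard' hle]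
  exact subset_closure (mem_insert _ _)

end basisOf

/-- Every element of the basis of a `k`-maximal submonoid is a primitive word. -/
theorem basis_of_kMaximal_primitive {α : Type*} (k : ℕ) (M : Submonoid (FreeMonoid α))
    (hmax : IsKMaximal k M) :
    ∀ x ∈ basisOf M, Primitive x := by
  intro x hx
  have hx1 : x ≠ 1 := hx.1.2
  refine ⟨hx1, fun v n hxv => ?_⟩
  by_contra hn1
  have hn0 : n ≠ 0 := by rintro rfl; exact hx1 hxv
  have hv1 : v ≠ 1 := by rintro rfl; exact hx1 (hxv.trans (one_pow n))
  have hn2 : 2 ≤ n := by omega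
  have hvM : v ∈ M := hmax.mem_of_notMem_basisOf_closure_insert hx <|
    hxv ▸ pow_notMem_basisOf (subset_closure (mem_insert _ _)) hv1 hn2
  exact pow_notMem_basisOf hvM hv1 hn2 (hxv ▸ hx)
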